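/- arXiv:2311.14051 — 3 statements merged into one kernel-verified Lean document; each statement's English description precedes it below -/
import Mathlib

section
/- Let μ be a Radon measure on ℝⁿ whose heat extension u(x,t) = ∫ (4πt)^{-n/2} exp(-|x-ξ|²/(4t)) dμ(ξ) is finite for all (x,t) ∈ ℝⁿ × (0,∞), and let α ∈ [0,n). Then there exists a constant c(α,n) > 0, independent of μ and x, such that for every x ∈ ℝⁿ, limsup_{t→0⁺} t^{α/2} u(x,t) ≤ c(α,n) · limsup_{r→0⁺} μ(B(x,r)) / r^{n-α}. -/
/-!
Split the heat integral at a radius `r₀` below which `μ (B(x, r)) ≤ L r^(n-α)`. Inside the ball,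
cut into the annuli `k √t ≤ |x - ξ| < (k + 1) √t`: there the kernel is at most
`(4πt)^(-n/2) e^(-k²/4)` and the measure at most `L ((k + 1) √t)^(n-α)`, so after multiplying by
`t^(α/2)` all powers of `t` cancel and the annuli sum to `L · heatDensityConst n`. Outside the ball,
for `t ≤ 1` the kernel is at most `t^(-n/2) e^((r₀² - r₀²/t)/4)` times the kernel at time `1`, whose
integral is finite, so that part vanishes as `t → 0`. Finally let `L` decrease to the upper density.
-/

open MeasureTheory Filter Metric Set

noncomputable def heatK (n : ℕ) (x : EuclideanSpace ℝ (Fin n)) (t : ℝ) : ℝ :=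
  (4 * Real.pi * t) ^ (-(n : ℝ) / 2) * Real.exp (-‖x‖ ^ 2 / (4 * t))

open Real
open scoped ENNReal Topology

noncomputable def heatDensityConst (n : ℕ) : ℝ :=
  (4 * π) ^ (-(n : ℝ) / 2) * ∑' k : ℕ, ((k : ℝ) + 1) ^ n * exp (-(k : ℝ) ^ 2 / 4)

lemma summable_succ_pow_mul_exp_neg_sq (n : ℕ) :
    Summable fun k : ℕ => ((k : ℝ) + 1) ^ n * exp (-(k : ℝ) ^ 2 / 4) := by
  have hshift : Summable fun k : ℕ => ((k + 1 : ℕ) : ℝ) ^ n * exp (-(1 / 4) * (k + 1 : ℕ)) :=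
    (summable_nat_add_iff 1).2 (summable_pow_mul_exp_neg_nat_mul n (by norm_num))
  refine ((hshift.mul_left (exp (1 / 4))).of_nonneg_of_le (fun k => by positivity)) fun k => ?_
  have hk : (k : ℝ) ≤ (k : ℝ) ^ 2 := by exact_mod_cast Nat.le_self_pow two_ne_zero k
  push_cast
  rw [mul_left_comm, ← exp_add]
  gcongr
  linarith

lemma heatDensityConst_pos (n : ℕ) : 0 < heatDensityConst n :=
  mul_pos (by positivity) <|
    (summable_succ_pow_mul_exp_neg_sq n).tsum_pos (fun k => by positivity) 0 (by positivity)

lemma ball_subset_iUnion_annulus {E : Type*} [PseudoMetricSpace E] (x : E) {s : ℝ} (hs : 0 < s)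
    (r : ℝ) : ball x r ⊆ ⋃ k : ℕ, ball x (min ((k + 1) * s) r) \ ball x (k * s) := by
  intro y hy
  rw [mem_ball] at hy
  refine mem_iUnion.2 ⟨⌊dist y x / s⌋₊, ?_, ?_⟩
  · rw [mem_ball, lt_min_iff, ← div_lt_iff₀ hs]
    exact ⟨Nat.lt_floor_add_one _, hy⟩
  · rw [mem_ball, not_lt, ← le_div_iff₀ hs]
    exact Nat.floor_le (by positivity)

section HeatKernel

variable {n : ℕ}

lemma heatK_le_of_mul_sqrt_le_norm {y : EuclideanSpace ℝ (Fin n)} {t k : ℝ} (ht : 0 < t)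
    (hk : 0 ≤ k) (hy : k * √t ≤ ‖y‖) :
    heatK n y t ≤ (4 * π * t) ^ (-(n : ℝ) / 2) * exp (-k ^ 2 / 4) := by
  have hsq : k ^ 2 * t ≤ ‖y‖ ^ 2 := by
    simpa [mul_pow, sq_sqrt ht.le] using pow_le_pow_left₀ (by positivity) hy 2
  unfold heatK
  gcongr _ * exp ?_
  rw [div_le_div_iff₀ (by positivity) (by norm_num)]
  nlinarith

lemma heatK_le_mul_heatK_one {y : EuclideanSpace ℝ (Fin n)} {t r : ℝ} (ht : 0 < t) (ht1 : t ≤ 1)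
    (hr : 0 ≤ r) (hy : r ≤ ‖y‖) :
    heatK n y t ≤ t ^ (-(n : ℝ) / 2) * exp ((r ^ 2 - r ^ 2 / t) / 4) * heatK n y 1 := by
  have hgap : 0 ≤ (‖y‖ ^ 2 - r ^ 2) * (1 / t - 1) := by
    have : 1 ≤ 1 / t := by rw [le_div_iff₀ ht]; linarith
    exact mul_nonneg (by nlinarith) (by linarith)
  have hexp : -‖y‖ ^ 2 / (4 * t) =
      (r ^ 2 - r ^ 2 / t) / 4 + -‖y‖ ^ 2 / (4 * 1) - (‖y‖ ^ 2 - r ^ 2) * (1 / t - 1) / 4 := by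
    field_simp
    ring
  unfold heatK
  rw [mul_rpow (by positivity) ht.le, mul_one, hexp]
  calc (4 * π) ^ (-(n : ℝ) / 2) * t ^ (-(n : ℝ) / 2) *
        exp ((r ^ 2 - r ^ 2 / t) / 4 + -‖y‖ ^ 2 / (4 * 1) - (‖y‖ ^ 2 - r ^ 2) * (1 / t - 1) / 4)
      ≤ (4 * π) ^ (-(n : ℝ) / 2) * t ^ (-(n : ℝ) / 2) *
        exp ((r ^ 2 - r ^ 2 / t) / 4 + -‖y‖ ^ 2 / (4 * 1)) := by
        gcongr
        linarith
    _ = _ := by rw [exp_add]; ring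

lemma rpow_mul_heat_prefactor_mul_rpow (α : ℝ) {t a : ℝ} (ht : 0 < t) (ha : 0 ≤ a) :
    t ^ (α / 2) * ((4 * π * t) ^ (-(n : ℝ) / 2) * (a * √t) ^ ((n : ℝ) - α)) =
      (4 * π) ^ (-(n : ℝ) / 2) * a ^ ((n : ℝ) - α) := by
  rw [mul_rpow (by positivity) ht.le, mul_rpow ha (sqrt_nonneg t), sqrt_eq_rpow,
    ← rpow_mul ht.le]
  have ht_pow : t ^ (α / 2) * (t ^ (-(n : ℝ) / 2) * t ^ (1 / 2 * ((n : ℝ) - α))) = 1 := by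
    rw [← rpow_add ht, ← rpow_add ht]
    convert rpow_zero t using 2
    ring
  linear_combination ((4 * π) ^ (-(n : ℝ) / 2) * a ^ ((n : ℝ) - α)) * ht_pow

end HeatKernel

section DensityBound

variable {n : ℕ} {α : ℝ} {μ : Measure (EuclideanSpace ℝ (Fin n))} {x : EuclideanSpace ℝ (Fin n)}
  {L r₀ : ℝ}

lemma rpow_mul_setLIntegral_annulus_heatK_le (hα₀ : 0 ≤ α) (hαn : α ≤ n) (hL : 0 ≤ L)
    (hball : ∀ r ∈ Ioc 0 r₀, μ (ball x r) ≤ ENNReal.ofReal (L * r ^ ((n : ℝ) - α)))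
    (hr₀ : 0 < r₀) {t : ℝ} (ht : 0 < t) (k : ℕ) :
    ENNReal.ofReal (t ^ (α / 2)) * ∫⁻ ξ in ball x (min ((k + 1) * √t) r₀) \ ball x (k * √t),
        ENNReal.ofReal (heatK n (x - ξ) t) ∂μ ≤
      ENNReal.ofReal
        (L * ((4 * π) ^ (-(n : ℝ) / 2) * (((k : ℝ) + 1) ^ n * exp (-(k : ℝ) ^ 2 / 4)))) := by
  set ρ := min ((k + 1) * √t) r₀
  have hρ : 0 < ρ := lt_min (by positivity) hr₀
  have hkernel : ∀ ξ ∈ ball x ρ \ ball x (k * √t), ENNReal.ofReal (heatK n (x - ξ) t) ≤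
      ENNReal.ofReal ((4 * π * t) ^ (-(n : ℝ) / 2) * exp (-(k : ℝ) ^ 2 / 4)) := by
    rintro ξ ⟨-, hξ⟩
    rw [mem_ball, not_lt, dist_comm, dist_eq_norm] at hξ
    exact ENNReal.ofReal_le_ofReal (heatK_le_of_mul_sqrt_le_norm ht k.cast_nonneg hξ)
  have hmeasure : μ (ball x ρ \ ball x (k * √t)) ≤
      ENNReal.ofReal (L * (((k : ℝ) + 1) * √t) ^ ((n : ℝ) - α)) :=
    calc μ (ball x ρ \ ball x (k * √t)) ≤ μ (ball x ρ) := measure_mono sdiff_subset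
      _ ≤ ENNReal.ofReal (L * ρ ^ ((n : ℝ) - α)) := hball ρ ⟨hρ, min_le_right _ _⟩
      _ ≤ _ := by
        gcongr
        exact min_le_left _ _
  have hpow : ((k : ℝ) + 1) ^ ((n : ℝ) - α) ≤ ((k : ℝ) + 1) ^ n := by
    rw [← rpow_natCast]
    exact rpow_le_rpow_of_exponent_le (by linarith [k.cast_nonneg (α := ℝ)]) (by linarith)
  calc ENNReal.ofReal (t ^ (α / 2)) * ∫⁻ ξ in ball x ρ \ ball x (k * √t),
        ENNReal.ofReal (heatK n (x - ξ) t) ∂μ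
      ≤ ENNReal.ofReal (t ^ (α / 2)) *
          (ENNReal.ofReal ((4 * π * t) ^ (-(n : ℝ) / 2) * exp (-(k : ℝ) ^ 2 / 4)) *
            ENNReal.ofReal (L * (((k : ℝ) + 1) * √t) ^ ((n : ℝ) - α))) := by
        gcongr
        exact (setLIntegral_mono measurable_const hkernel).trans_eq (setLIntegral_const _ _)
          |>.trans (by gcongr)
    _ = ENNReal.ofReal (L * ((4 * π) ^ (-(n : ℝ) / 2) *
          (((k : ℝ) + 1) ^ ((n : ℝ) - α) * exp (-(k : ℝ) ^ 2 / 4)))) := by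
        rw [← ENNReal.ofReal_mul (by positivity), ← ENNReal.ofReal_mul (by positivity)]
        congr 1
        linear_combination (L * exp (-(k : ℝ) ^ 2 / 4)) *
          rpow_mul_heat_prefactor_mul_rpow (n := n) α ht (by positivity : (0 : ℝ) ≤ k + 1)
    _ ≤ _ := by gcongr

lemma rpow_mul_setLIntegral_ball_heatK_le (hα₀ : 0 ≤ α) (hαn : α ≤ n) (hL : 0 ≤ L)
    (hball : ∀ r ∈ Ioc 0 r₀, μ (ball x r) ≤ ENNReal.ofReal (L * r ^ ((n : ℝ) - α)))
    (hr₀ : 0 < r₀) {t : ℝ} (ht : 0 < t) :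
    ENNReal.ofReal (t ^ (α / 2)) * ∫⁻ ξ in ball x r₀, ENNReal.ofReal (heatK n (x - ξ) t) ∂μ ≤
      ENNReal.ofReal (L * heatDensityConst n) := by
  have hsum := ((summable_succ_pow_mul_exp_neg_sq n).mul_left ((4 * π) ^ (-(n : ℝ) / 2))).mul_left L
  calc ENNReal.ofReal (t ^ (α / 2)) * ∫⁻ ξ in ball x r₀, ENNReal.ofReal (heatK n (x - ξ) t) ∂μ
      ≤ ENNReal.ofReal (t ^ (α / 2)) * ∑' k : ℕ,
          ∫⁻ ξ in ball x (min ((k + 1) * √t) r₀) \ ball x (k * √t),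
            ENNReal.ofReal (heatK n (x - ξ) t) ∂μ := by
        gcongr
        exact (lintegral_mono_set (ball_subset_iUnion_annulus x (sqrt_pos.2 ht) r₀)).trans
          (lintegral_iUnion_le _ _)
    _ ≤ ∑' k : ℕ, ENNReal.ofReal
          (L * ((4 * π) ^ (-(n : ℝ) / 2) * (((k : ℝ) + 1) ^ n * exp (-(k : ℝ) ^ 2 / 4)))) := by
        rw [← ENNReal.tsum_mul_left]
        exact ENNReal.tsum_le_tsum
          (rpow_mul_setLIntegral_annulus_heatK_le hα₀ hαn hL hball hr₀ ht)
    _ = ENNReal.ofReal (L * heatDensityConst n) := by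
        rw [← ENNReal.ofReal_tsum_of_nonneg (fun k => by positivity) hsum, tsum_mul_left,
          tsum_mul_left, heatDensityConst]

end DensityBound

lemma tendsto_rpow_mul_exp_neg_div_nhdsGT_zero (β : ℝ) {c : ℝ} (hc : 0 < c) :
    Tendsto (fun t : ℝ => t ^ β * exp (-c / t)) (𝓝[>] 0) (𝓝 0) := by
  refine ((tendsto_rpow_mul_exp_neg_mul_atTop_nhds_zero (-β) c hc).comp
    tendsto_inv_nhdsGT_zero).congr' ?_
  filter_upwards [self_mem_nhdsWithin] with t (ht : 0 < t)
  simp only [Function.comp_apply]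
  rw [inv_rpow ht.le, rpow_neg ht.le, inv_inv, neg_mul, ← div_eq_mul_inv, neg_div]

section FarField

variable {n : ℕ} {μ : Measure (EuclideanSpace ℝ (Fin n))} {x : EuclideanSpace ℝ (Fin n)}

lemma tendsto_rpow_mul_setLIntegral_compl_ball_heatK (α : ℝ)
    (hfin : ∫⁻ ξ, ENNReal.ofReal (heatK n (x - ξ) 1) ∂μ ≠ ⊤) {r : ℝ} (hr : 0 < r) :
    Tendsto (fun t : ℝ => ENNReal.ofReal (t ^ (α / 2)) *
        ∫⁻ ξ in (ball x r)ᶜ, ENNReal.ofReal (heatK n (x - ξ) t) ∂μ) (𝓝[>] 0) (𝓝 0) := by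
  set φ : ℝ → ℝ := fun t => t ^ (α / 2) * (t ^ (-(n : ℝ) / 2) * exp ((r ^ 2 - r ^ 2 / t) / 4))
  have hφ : Tendsto φ (𝓝[>] 0) (𝓝 0) := by
    have h := (tendsto_rpow_mul_exp_neg_div_nhdsGT_zero ((α - n) / 2)
      (by positivity : 0 < r ^ 2 / 4)).const_mul (exp (r ^ 2 / 4))
    rw [mul_zero] at h
    refine h.congr' ?_
    filter_upwards [self_mem_nhdsWithin] with t (ht : 0 < t)
    simp only [φ]
    rw [mul_left_comm, ← exp_add, ← mul_assoc (t ^ (α / 2)), ← rpow_add ht]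
    congr 2 <;> ring
  have hbound : ∀ᶠ t in 𝓝[>] (0 : ℝ), ENNReal.ofReal (t ^ (α / 2)) *
      ∫⁻ ξ in (ball x r)ᶜ, ENNReal.ofReal (heatK n (x - ξ) t) ∂μ ≤
        ENNReal.ofReal (φ t) * ∫⁻ ξ, ENNReal.ofReal (heatK n (x - ξ) 1) ∂μ := by
    filter_upwards [Ioc_mem_nhdsGT one_pos] with t ⟨ht, ht1⟩
    have hkernel : ∀ ξ ∈ (ball x r)ᶜ, ENNReal.ofReal (heatK n (x - ξ) t) ≤
        ENNReal.ofReal (t ^ (-(n : ℝ) / 2) * exp ((r ^ 2 - r ^ 2 / t) / 4)) *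
          ENNReal.ofReal (heatK n (x - ξ) 1) := by
      intro ξ hξ
      rw [mem_compl_iff, mem_ball, not_lt, dist_comm, dist_eq_norm] at hξ
      rw [← ENNReal.ofReal_mul (by positivity)]
      exact ENNReal.ofReal_le_ofReal (heatK_le_mul_heatK_one ht ht1 hr.le hξ)
    calc ENNReal.ofReal (t ^ (α / 2)) *
          ∫⁻ ξ in (ball x r)ᶜ, ENNReal.ofReal (heatK n (x - ξ) t) ∂μ
        ≤ ENNReal.ofReal (t ^ (α / 2)) *
          ∫⁻ ξ, ENNReal.ofReal (t ^ (-(n : ℝ) / 2) * exp ((r ^ 2 - r ^ 2 / t) / 4)) *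
            ENNReal.ofReal (heatK n (x - ξ) 1) ∂μ :=
          mul_le_mul_right ((setLIntegral_mono' measurableSet_ball.compl hkernel).trans
            (setLIntegral_le_lintegral _ _)) _
      _ = _ := by
          rw [lintegral_const_mul' _ _ ENNReal.ofReal_ne_top, ← mul_assoc,
            ← ENNReal.ofReal_mul (by positivity)]
  have hlim : Tendsto (fun t => ENNReal.ofReal (φ t) * ∫⁻ ξ, ENNReal.ofReal (heatK n (x - ξ) 1) ∂μ)
      (𝓝[>] 0) (𝓝 0) := by
    simpa using ENNReal.Tendsto.mul_const (ENNReal.tendsto_ofReal hφ) (.inr hfin)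
  exact tendsto_of_tendsto_of_tendsto_of_le_of_le' tendsto_const_nhds hlim
    (.of_forall fun _ => zero_le) hbound

end FarField

lemma limsup_rpow_mul_lintegral_heatK_le {n : ℕ} {α : ℝ} {μ : Measure (EuclideanSpace ℝ (Fin n))}
    {x : EuclideanSpace ℝ (Fin n)} (hα₀ : 0 ≤ α) (hαn : α ≤ n)
    (hfin : ∫⁻ ξ, ENNReal.ofReal (heatK n (x - ξ) 1) ∂μ ≠ ⊤) {L : ℝ} (hL : 0 ≤ L)
    (hball : ∀ᶠ r in 𝓝[>] 0, μ (ball x r) ≤ ENNReal.ofReal (L * r ^ ((n : ℝ) - α))) :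
    limsup (fun t : ℝ => ENNReal.ofReal (t ^ (α / 2)) *
        ∫⁻ ξ, ENNReal.ofReal (heatK n (x - ξ) t) ∂μ) (𝓝[>] 0) ≤
      ENNReal.ofReal (L * heatDensityConst n) := by
  obtain ⟨r₀, hr₀, hsub⟩ := mem_nhdsGT_iff_exists_Ioc_subset.1 hball
  set F : ℝ → ℝ≥0∞ := fun t => ENNReal.ofReal (t ^ (α / 2)) *
    ∫⁻ ξ in (ball x r₀)ᶜ, ENNReal.ofReal (heatK n (x - ξ) t) ∂μ
  have hsplit : ∀ᶠ t in 𝓝[>] (0 : ℝ), ENNReal.ofReal (t ^ (α / 2)) *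
      ∫⁻ ξ, ENNReal.ofReal (heatK n (x - ξ) t) ∂μ ≤
        ENNReal.ofReal (L * heatDensityConst n) + F t := by
    filter_upwards [self_mem_nhdsWithin] with t (ht : 0 < t)
    rw [← lintegral_add_compl _ (measurableSet_ball (x := x) (ε := r₀)), mul_add]
    gcongr
    exact rpow_mul_setLIntegral_ball_heatK_le hα₀ hαn hL (fun r hr => hsub hr) hr₀ ht
  have hF : Tendsto (fun t => ENNReal.ofReal (L * heatDensityConst n) + F t) (𝓝[>] 0)
      (𝓝 (ENNReal.ofReal (L * heatDensityConst n))) := by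
    simpa using tendsto_const_nhds.add (tendsto_rpow_mul_setLIntegral_compl_ball_heatK α hfin hr₀)
  exact (limsup_le_limsup hsplit).trans_eq hF.limsup_eq

theorem stmt1 (n : ℕ) (α : ℝ) (hα : α ∈ Ico (0 : ℝ) n) :
    ∃ c : ℝ, 0 < c ∧
      ∀ μ : Measure (EuclideanSpace ℝ (Fin n)),
        (∀ (x : EuclideanSpace ℝ (Fin n)) (t : ℝ), 0 < t →
          (∫⁻ ξ, ENNReal.ofReal (heatK n (x - ξ) t) ∂μ) ≠ ⊤) →
        ∀ x : EuclideanSpace ℝ (Fin n),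
          limsup (fun t : ℝ =>
              ENNReal.ofReal (t ^ (α / 2)) *
                ∫⁻ ξ, ENNReal.ofReal (heatK n (x - ξ) t) ∂μ)
            (nhdsWithin 0 (Ioi 0)) ≤
          ENNReal.ofReal c *
            limsup (fun r : ℝ => μ (ball x r) / ENNReal.ofReal (r ^ (n - α)))
              (nhdsWithin 0 (Ioi 0)) := by
  obtain ⟨hα₀, hαn⟩ := hα
  refine ⟨heatDensityConst n, heatDensityConst_pos n, fun μ hμ x => ?_⟩
  refine ENNReal.le_mul_of_forall_lt (.inl (ENNReal.ofReal_pos.2 (heatDensityConst_pos n)).ne')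
    (.inl ENNReal.ofReal_ne_top) fun c hc b hb => ?_
  rcases eq_or_ne b ⊤ with rfl | hb_top
  · rw [ENNReal.mul_top (pos_of_gt hc).ne']
    exact le_top
  have hball : ∀ᶠ r in 𝓝[>] (0 : ℝ),
      μ (ball x r) ≤ ENNReal.ofReal (b.toReal * r ^ ((n : ℝ) - α)) := by
    filter_upwards [eventually_lt_of_limsup_lt hb, self_mem_nhdsWithin] with r hr (hr₀ : 0 < r)
    rw [ENNReal.div_lt_iff (.inl (ENNReal.ofReal_pos.2 (rpow_pos_of_pos hr₀ _)).ne')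
      (.inl ENNReal.ofReal_ne_top)] at hr
    rw [ENNReal.ofReal_mul ENNReal.toReal_nonneg, ENNReal.ofReal_toReal hb_top]
    exact hr.le
  calc _ ≤ ENNReal.ofReal (b.toReal * heatDensityConst n) :=
        limsup_rpow_mul_lintegral_heatK_le hα₀ hαn.le (hμ x 1 one_pos) ENNReal.toReal_nonneg hball
    _ = ENNReal.ofReal (heatDensityConst n) * b := by
        rw [ENNReal.ofReal_mul ENNReal.toReal_nonneg, ENNReal.ofReal_toReal hb_top, mul_comm]
    _ ≤ c * b := by gcongr
end

section
/- Let μ be a Borel measure on ℝⁿ (or a complete separable metric measure space), s ≥ 0, and let A = { x : limsup_{r→0⁺} μ(B(x,r))/rˢ = +∞ }. If μ is finite on bounded sets, then Hˢ(A) = 0, where Hˢ is the s-dimensional Hausdorff measure. -/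
/-!
Around each point of infinite upper `s`-density pick a small radius `ρ` with
`μ (ball x ρ) ≥ t ρ ^ s`. By the Vitali covering lemma, a disjoint subfamily of these balls,
enlarged four times, still covers the set, so the set is covered by sets of diameter `≤ 8 ρ`
whose `s`-th powers sum, by disjointness of the small balls, to at most `8 ^ s / t` times the
mass of a neighbourhood.
Letting the radii tend to `0` and `t → ∞` shows that the Hausdorff measure vanishes locally,
hence everywhere by second countability.
-/

open MeasureTheory Filter Metric Set
open scoped ENNReal Topology

section

variable {X : Type*} [MetricSpace X]

theorem ediam_closedBall_le_ofReal (x : X) {r : ℝ} (hr : 0 ≤ r) :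
    ediam (closedBall x r) ≤ ENNReal.ofReal (2 * r) := by
  rw [← closedEBall_ofReal hr, ENNReal.ofReal_mul zero_le_two, ENNReal.ofReal_ofNat]
  exact ediam_closedEBall_le

theorem tsum_ediam_closedBall_mul_rpow_le {ι : Type*} (c : ι → X) {r : ι → ℝ}
    (hr : ∀ i, 0 ≤ r i) {s : ℝ} (hs : 0 ≤ s) {k : ℝ} (hk : 0 ≤ k) :
    ∑' i, ediam (closedBall (c i) (k * r i)) ^ s
      ≤ ENNReal.ofReal ((2 * k) ^ s) * ∑' i, ENNReal.ofReal (r i ^ s) := by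
  rw [← ENNReal.tsum_mul_left]
  refine ENNReal.tsum_le_tsum fun i => ?_
  calc ediam (closedBall (c i) (k * r i)) ^ s
      ≤ ENNReal.ofReal (2 * (k * r i)) ^ s :=
        ENNReal.rpow_le_rpow (ediam_closedBall_le_ofReal _ (mul_nonneg hk (hr i))) hs
    _ = ENNReal.ofReal ((2 * k) ^ s) * ENNReal.ofReal (r i ^ s) := by
        have hkr : 0 ≤ 2 * (k * r i) := mul_nonneg zero_le_two (mul_nonneg hk (hr i))
        rw [ENNReal.ofReal_rpow_of_nonneg hkr hs, ← mul_assoc,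
          Real.mul_rpow (by positivity) (hr i), ENNReal.ofReal_mul (by positivity)]

variable [MeasurableSpace X]

noncomputable def upperDensity (μ : Measure X) (s : ℝ) (x : X) : ℝ≥0∞ :=
  limsup (fun r : ℝ => μ (ball x r) / ENNReal.ofReal (r ^ s)) (𝓝[>] 0)

theorem exists_mul_rpow_le_measure_ball_of_upperDensity_eq_top {μ : Measure X} {s : ℝ} {x : X}
    (hx : upperDensity μ s x = ⊤) {t : ℝ≥0∞} (ht : t ≠ ⊤) {δ : ℝ} (hδ : 0 < δ) :
    ∃ r ∈ Ioo 0 δ, t * ENNReal.ofReal (r ^ s) ≤ μ (ball x r) := by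
  have hfreq : ∃ᶠ r in 𝓝[>] (0 : ℝ), t < μ (ball x r) / ENNReal.ofReal (r ^ s) :=
    frequently_lt_of_lt_limsup (by isBoundedDefault)
      (hx.symm ▸ ht.lt_top : t < upperDensity μ s x)
  obtain ⟨r, hlt, hr⟩ := (hfreq.and_eventually (Ioo_mem_nhdsGT hδ)).exists
  have hpos : ENNReal.ofReal (r ^ s) ≠ 0 :=
    (ENNReal.ofReal_pos.mpr (Real.rpow_pos_of_pos hr.1 s)).ne'
  exact ⟨r, hr, (ENNReal.le_div_iff_mul_le (.inl hpos) (.inl ENNReal.ofReal_ne_top)).mp hlt.le⟩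

variable [BorelSpace X] [TopologicalSpace.SeparableSpace X]

theorem exists_closedBall_cover_of_upperDensity_eq_top {μ : Measure X} {s : ℝ} {A : Set X}
    (hA : ∀ x ∈ A, upperDensity μ s x = ⊤) {t : ℝ≥0∞} (ht : t ≠ ⊤) {δ : ℝ}
    (hδ : 0 < δ) :
    ∃ (v : Set A) (ρ : A → ℝ), v.Countable ∧ (∀ b ∈ v, 0 < ρ b ∧ ρ b < δ) ∧
      A ⊆ ⋃ b ∈ v, closedBall (b : X) (4 * ρ b) ∧
      t * ∑' b : v, ENNReal.ofReal (ρ b ^ s) ≤ μ (thickening δ A) := by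
  choose ρ hρ hmass using fun x : A =>
    exists_mul_rpow_le_measure_ball_of_upperDensity_eq_top (hA x x.2) ht hδ
  obtain ⟨v, -, hdisj, hcov⟩ := Vitali.exists_disjoint_subfamily_covering_enlargement_closedBall
    univ Subtype.val ρ δ (fun b _ => (hρ b).2.le) 4 (by norm_num)
  have hv : v.Countable := hdisj.countable_of_nonempty_interior fun b _ =>
    ⟨b, ball_subset_interior_closedBall (mem_ball_self (hρ b).1)⟩
  refine ⟨v, ρ, hv, fun b _ => hρ b, fun x hx => ?_, ?_⟩
  · obtain ⟨b, hb, hsub⟩ := hcov ⟨x, hx⟩ (mem_univ _)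
    exact mem_biUnion hb (hsub (mem_closedBall_self (hρ _).1.le))
  · calc t * ∑' b : v, ENNReal.ofReal (ρ b ^ s)
        = ∑' b : v, t * ENNReal.ofReal (ρ b ^ s) := ENNReal.tsum_mul_left.symm
      _ ≤ ∑' b : v, μ (ball (b : X) (ρ b)) := ENNReal.tsum_le_tsum fun b => hmass b
      _ = μ (⋃ b ∈ v, ball (b : X) (ρ b)) :=
          (measure_biUnion hv (hdisj.mono fun _ => ball_subset_closedBall)
            fun _ _ => measurableSet_ball).symm
      _ ≤ μ (thickening δ A) := measure_mono <| iUnion₂_subset fun b _ =>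
          (ball_subset_ball (hρ b).2.le).trans (ball_subset_thickening b.2 δ)

theorem hausdorffMeasure_eq_zero_of_upperDensity_eq_top {μ : Measure X} {s : ℝ} (hs : 0 ≤ s)
    {A : Set X} (hA : ∀ x ∈ A, upperDensity μ s x = ⊤) (hfin : μ (thickening 1 A) ≠ ⊤) :
    μH[s] A = 0 := by
  choose v ρ hv hρ hcov hmass using fun m : ℕ =>
    exists_closedBall_cover_of_upperDensity_eq_top hA (t := m + 1) (by simp)
      (δ := ((m : ℝ) + 1)⁻¹) (by positivity)
  have : ∀ m, Countable (v m) := fun m => (hv m).to_subtype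
  set C := ENNReal.ofReal ((2 * 4) ^ s) * μ (thickening 1 A)
  have hsum : ∀ m : ℕ, ∑' b : v m, ediam (closedBall (b : X) (4 * ρ m b)) ^ s
      ≤ C * ((m : ℝ≥0∞) + 1)⁻¹ := by
    intro m
    calc ∑' b : v m, ediam (closedBall (b : X) (4 * ρ m b)) ^ s
        ≤ ENNReal.ofReal ((2 * 4) ^ s) * ∑' b : v m, ENNReal.ofReal (ρ m b ^ s) :=
          tsum_ediam_closedBall_mul_rpow_le _ (r := fun b : v m => ρ m b)
            (fun b => (hρ m b b.2).1.le) hs zero_le_four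
      _ ≤ C * ((m : ℝ≥0∞) + 1)⁻¹ := by
          rw [mul_assoc]
          gcongr
          rw [← div_eq_mul_inv, ENNReal.le_div_iff_mul_le (.inl (by simp)) (.inl (by simp)),
            mul_comm]
          refine (hmass m).trans (measure_mono (thickening_mono ?_ A))
          exact inv_le_one_of_one_le₀ (by simp)
  have hdiam :
      Tendsto (fun m : ℕ => ENNReal.ofReal (8 * ((m : ℝ) + 1)⁻¹)) atTop (𝓝 0) := by
    simpa using ENNReal.tendsto_ofReal
      ((tendsto_one_div_add_atTop_nhds_zero_nat).const_mul (8 : ℝ))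
  have hC : Tendsto (fun m : ℕ => C * ((m : ℝ≥0∞) + 1)⁻¹) atTop (𝓝 0) := by
    simpa using ENNReal.Tendsto.const_mul
      (ENNReal.tendsto_inv_nat_nhds_zero.comp (tendsto_add_atTop_nat 1))
      (.inr (ENNReal.mul_ne_top ENNReal.ofReal_ne_top hfin))
  refine le_antisymm ?_ zero_le
  calc μH[s] A
      ≤ liminf (fun m => ∑' b : v m, ediam (closedBall (b : X) (4 * ρ m b)) ^ s) atTop := by
        refine Measure.hausdorffMeasure_le_liminf_tsum s A _ hdiam _ (.of_forall fun m b => ?_)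
          (.of_forall fun m x hx => ?_)
        · have hρb := hρ m b b.2
          refine (ediam_closedBall_le_ofReal _ (by linarith)).trans
            (ENNReal.ofReal_le_ofReal (by linarith))
        · obtain ⟨b, hb, hxb⟩ := mem_iUnion₂.mp (hcov m hx)
          exact mem_iUnion.mpr ⟨⟨b, hb⟩, hxb⟩
    _ ≤ liminf (fun m : ℕ => C * ((m : ℝ≥0∞) + 1)⁻¹) atTop :=
        liminf_le_liminf (.of_forall hsum)
    _ = 0 := hC.liminf_eq

theorem hausdorffMeasure_setOf_upperDensity_eq_top {μ : Measure X} {s : ℝ} (hs : 0 ≤ s)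
    (hμ : ∀ B : Set X, Bornology.IsBounded B → μ B ≠ ⊤) :
    μH[s] {x | upperDensity μ s x = ⊤} = 0 := by
  refine measure_null_of_locally_null _ fun x _ =>
    ⟨_, inter_mem_nhdsWithin _ (ball_mem_nhds x one_pos), ?_⟩
  refine hausdorffMeasure_eq_zero_of_upperDensity_eq_top hs (fun y hy => hy.1) (hμ _ ?_)
  exact (isBounded_ball.subset inter_subset_right).thickening

end

theorem stmt3 (n : ℕ) (s : ℝ) (hs : 0 ≤ s) (μ : Measure (EuclideanSpace ℝ (Fin n)))
    (hloc : ∀ B : Set (EuclideanSpace ℝ (Fin n)), Bornology.IsBounded B → μ B ≠ ⊤) :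
    μH[s] {x : EuclideanSpace ℝ (Fin n) |
        limsup (fun r : ℝ => μ (ball x r) / ENNReal.ofReal (r ^ s))
          (nhdsWithin 0 (Ioi 0)) = ⊤} = 0 :=
  hausdorffMeasure_setOf_upperDensity_eq_top hs hloc
end

section
/- Let E ⊆ ℝⁿ with H^{n−α}(E) = 0 for some α ∈ [0,n). Then there exists a nonnegative function f ∈ L¹(ℝⁿ) such that the heat extension u(x,t) = ∫ (4πt)^{-n/2} exp(-|x-ξ|²/(4t)) f(ξ) dξ satisfies limsup_{t→0⁺} t^{α/2} u(x,t) = +∞ for every x ∈ E. -/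
/-!
Since `μH[n - α] E = 0`, for every `k` the set `E` is covered by balls `B(c_kj, r_kj)` with
`∑_j r_kj ^ (n - α) ≤ 4⁻¹ ^ k`. Put `f = ∑_{k,j} 2 ^ k r_kj ^ (-α) 𝟙_{B(c_kj, r_kj)}`; its integral
is at most `|B(0,1)| ∑_k 2 ^ k 4⁻¹ ^ k < ∞`. If `x ∈ B(c_kj, r_kj)`, then at time `t = r_kj ^ 2` the
heat kernel centred at `x` is at least `e⁻¹ (4πt) ^ (-n/2)` on the whole ball, so
`t ^ (α/2) u(x, t) ≥ C 2 ^ k`. Choosing such a ball for each `k`, the radii tend to `0` and the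
lower bounds to `∞`.
-/

open MeasureTheory Filter Metric Set

open scoped ENNReal Topology

section HausdorffNull

variable {X : Type*} [MetricSpace X] [MeasurableSpace X] [BorelSpace X] {p : ℝ} {E : Set X}
  {ε : ℝ≥0∞}

theorem exists_cover_tsum_ediam_rpow_lt (hp : 0 < p) (hE : μH[p] E = 0) (hε : ε ≠ 0) :
    ∃ S : ℕ → Set X, E ⊆ ⋃ j, S j ∧ ∑' j, ediam (S j) ^ p < ε := by
  have h : (⨅ (S : ℕ → Set X) (_ : E ⊆ ⋃ j, S j) (_ : ∀ j, ediam (S j) ≤ 1),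
      ∑' j, ⨆ _ : (S j).Nonempty, ediam (S j) ^ p) < ε := by
    refine lt_of_le_of_lt ?_ (pos_iff_ne_zero.2 hε)
    rw [← hE, Measure.hausdorffMeasure_apply]
    exact le_iSup₂_of_le (1 : ℝ≥0∞) one_pos le_rfl
  simp only [iInf_lt_iff] at h
  obtain ⟨S, hcover, -, hsum⟩ := h
  refine ⟨S, hcover, lt_of_le_of_lt (ENNReal.tsum_le_tsum fun j => ?_) hsum⟩
  rcases (S j).eq_empty_or_nonempty with hS | hS
  · simp [hS, ENNReal.zero_rpow_of_pos hp]
  · exact le_iSup (fun _ : (S j).Nonempty => ediam (S j) ^ p) hS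

/-- Each `S j` of a small cover is enlarged to a ball about one of its points, of radius
`r j = (ediam (S j) ^ p + δ j) ^ p⁻¹` with `∑ δ j` small: positive and larger than
`ediam (S j)`. -/
theorem exists_ball_cover_tsum_rpow_lt [Nonempty X] (hp : 0 < p) (hE : μH[p] E = 0) (hε : ε ≠ 0) :
    ∃ (c : ℕ → X) (r : ℕ → ℝ), (∀ j, 0 < r j) ∧ E ⊆ ⋃ j, ball (c j) (r j) ∧
      ∑' j, ENNReal.ofReal (r j ^ p) < ε := by
  obtain ⟨S, hcover, hsum⟩ := exists_cover_tsum_ediam_rpow_lt hp hE (ENNReal.half_pos hε).ne'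
  obtain ⟨δ, hδ, hδsum⟩ := ENNReal.exists_pos_sum_of_countable' (ENNReal.half_pos hε).ne' ℕ
  have hfin : ∀ j, ediam (S j) ^ p ≠ ⊤ := fun j =>
    ((ENNReal.le_tsum j).trans_lt (hsum.trans_le le_top)).ne
  set R : ℕ → ℝ≥0∞ := fun j => (ediam (S j) ^ p + δ j) ^ p⁻¹
  have hRp : ∀ j, R j ^ p = ediam (S j) ^ p + δ j := fun j => ENNReal.rpow_inv_rpow hp.ne' _
  have hδfin : ∀ j, δ j ≠ ⊤ := ENNReal.ne_top_of_tsum_ne_top (hδsum.trans_le le_top).ne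
  have hRfin : ∀ j, R j ≠ ⊤ := fun j =>
    ENNReal.rpow_ne_top_of_nonneg (inv_nonneg.2 hp.le) (ENNReal.add_ne_top.2 ⟨hfin j, hδfin j⟩)
  have hdiam_lt : ∀ j, ediam (S j) < R j := fun j =>
    (ENNReal.lt_rpow_inv_iff hp).2 (ENNReal.lt_add_right (hfin j) (hδ j).ne')
  refine ⟨fun j => Classical.epsilon (· ∈ S j), fun j => (R j).toReal, fun j => ?_, ?_, ?_⟩
  · exact ENNReal.toReal_pos (pos_of_gt (hdiam_lt j)).ne' (hRfin j)
  · intro x hx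
    obtain ⟨j, hxj⟩ := mem_iUnion.1 (hcover hx)
    refine mem_iUnion.2 ⟨j, ?_⟩
    rw [mem_ball, ← edist_lt_ofReal, ENNReal.ofReal_toReal (hRfin j)]
    exact (edist_le_ediam_of_mem hxj (Classical.epsilon_spec ⟨x, hxj⟩)).trans_lt (hdiam_lt j)
  · have hr : ∀ j, ENNReal.ofReal ((R j).toReal ^ p) = ediam (S j) ^ p + δ j := fun j => by
      rw [ENNReal.toReal_rpow,
        ENNReal.ofReal_toReal (ENNReal.rpow_ne_top_of_nonneg hp.le (hRfin j)), hRp]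
    rw [tsum_congr hr, ENNReal.tsum_add, ← ENNReal.add_halves ε]
    exact ENNReal.add_lt_add hsum hδsum

end HausdorffNull

theorem sq_rpow_half {ρ : ℝ} (hρ : 0 ≤ ρ) (s : ℝ) : (ρ ^ 2) ^ (s / 2) = ρ ^ s := by
  rw [← Real.rpow_natCast_mul hρ]; congr 1; push_cast; ring

noncomputable def heatBallConst (n : ℕ) : ℝ :=
  (4 * Real.pi) ^ (-(n : ℝ) / 2) * Real.exp (-1) *
    (volume (ball (0 : EuclideanSpace ℝ (Fin n)) 1)).toReal

theorem heatBallConst_pos (n : ℕ) : 0 < heatBallConst n := by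
  have := ENNReal.toReal_pos (measure_ball_pos volume (0 : EuclideanSpace ℝ (Fin n)) one_pos).ne'
    measure_ball_lt_top.ne
  unfold heatBallConst
  positivity

section HeatKernel

variable {n : ℕ} {t : ℝ}

theorem heatK_nonneg (y : EuclideanSpace ℝ (Fin n)) (ht : 0 ≤ t) : 0 ≤ heatK n y t := by
  unfold heatK; positivity

theorem heatK_le (y : EuclideanSpace ℝ (Fin n)) (ht : 0 ≤ t) :
    heatK n y t ≤ (4 * Real.pi * t) ^ (-(n : ℝ) / 2) := by
  unfold heatK
  refine mul_le_of_le_one_right (by positivity) (Real.exp_le_one_iff.2 ?_)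
  rw [neg_div]
  exact neg_nonpos.2 (by positivity)

theorem rpow_mul_exp_neg_one_le_heatK {y : EuclideanSpace ℝ (Fin n)} (ht : 0 < t)
    (hy : ‖y‖ ^ 2 ≤ 4 * t) :
    (4 * Real.pi * t) ^ (-(n : ℝ) / 2) * Real.exp (-1) ≤ heatK n y t := by
  unfold heatK
  gcongr
  rw [neg_div, neg_le_neg_iff, div_le_one (by positivity)]
  exact hy

theorem integrable_heatK_mul {f : EuclideanSpace ℝ (Fin n) → ℝ} (hf : Integrable f)
    (x : EuclideanSpace ℝ (Fin n)) (ht : 0 ≤ t) :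
    Integrable fun ξ => heatK n (x - ξ) t * f ξ := by
  refine hf.bdd_mul (c := (4 * Real.pi * t) ^ (-(n : ℝ) / 2)) ?_ (ae_of_all _ fun ξ => ?_)
  · exact Continuous.aestronglyMeasurable (by unfold heatK; fun_prop)
  · rw [Real.norm_of_nonneg (heatK_nonneg _ ht)]
    exact heatK_le _ ht

theorem mul_le_integral_heatK_mul {f : EuclideanSpace ℝ (Fin n) → ℝ} (hf0 : ∀ ξ, 0 ≤ f ξ)
    (hf : Integrable f) {c x : EuclideanSpace ℝ (Fin n)} {ρ a : ℝ} (hρ : 0 < ρ) (ha : 0 ≤ a)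
    (hfa : ∀ᵐ ξ, ξ ∈ ball c ρ → a ≤ f ξ) (hx : x ∈ ball c ρ) :
    heatBallConst n * a ≤ ∫ ξ, heatK n (x - ξ) (ρ ^ 2) * f ξ := by
  set κ := (4 * Real.pi * ρ ^ 2) ^ (-(n : ℝ) / 2) * Real.exp (-1)
  have hlow : (ball c ρ).indicator (fun _ => κ * a) ≤ᵐ[volume]
      fun ξ => heatK n (x - ξ) (ρ ^ 2) * f ξ := by
    filter_upwards [hfa] with ξ hξ
    by_cases hξc : ξ ∈ ball c ρ
    · rw [indicator_of_mem hξc]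
      have hdist : ‖x - ξ‖ ^ 2 ≤ 4 * ρ ^ 2 := by
        have : ‖x - ξ‖ ≤ 2 * ρ := by
          rw [← dist_eq_norm]
          linarith [dist_triangle_right x ξ c, mem_ball.1 hx, mem_ball.1 hξc]
        nlinarith [norm_nonneg (x - ξ)]
      exact mul_le_mul (rpow_mul_exp_neg_one_le_heatK (by positivity) hdist) (hξ hξc) ha
        (heatK_nonneg _ (by positivity))
    · rw [indicator_of_notMem hξc]
      exact mul_nonneg (heatK_nonneg _ (by positivity)) (hf0 ξ)
  have hball : (volume (ball c ρ)).toReal =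
      ρ ^ n * (volume (ball (0 : EuclideanSpace ℝ (Fin n)) 1)).toReal := by
    rw [Measure.addHaar_ball_of_pos volume c hρ, finrank_euclideanSpace_fin, ENNReal.toReal_mul,
      ENNReal.toReal_ofReal (by positivity)]
  have hscale : (4 * Real.pi * ρ ^ 2) ^ (-(n : ℝ) / 2) * ρ ^ n =
      (4 * Real.pi) ^ (-(n : ℝ) / 2) := by
    rw [Real.mul_rpow (by positivity) (by positivity), sq_rpow_half hρ.le, mul_assoc,
      ← Real.rpow_natCast, ← Real.rpow_add hρ, neg_add_cancel, Real.rpow_zero, mul_one]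
  calc heatBallConst n * a = ∫ ξ, (ball c ρ).indicator (fun _ => κ * a) ξ := by
        rw [integral_indicator_const _ measurableSet_ball, measureReal_def, hball, smul_eq_mul,
          heatBallConst, ← hscale]
        ring
    _ ≤ ∫ ξ, heatK n (x - ξ) (ρ ^ 2) * f ξ :=
        integral_mono_ae ((integrableOn_const measure_ball_lt_top.ne).integrable_indicator
          measurableSet_ball) (integrable_heatK_mul hf x (by positivity)) hlow

theorem mul_le_rpow_mul_integral_heatK_mul {f : EuclideanSpace ℝ (Fin n) → ℝ}
    (hf0 : ∀ ξ, 0 ≤ f ξ) (hf : Integrable f) {c x : EuclideanSpace ℝ (Fin n)} {ρ w : ℝ} (α : ℝ)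
    (hρ : 0 < ρ) (hw : 0 ≤ w) (hfw : ∀ᵐ ξ, ξ ∈ ball c ρ → w * ρ ^ (-α) ≤ f ξ)
    (hx : x ∈ ball c ρ) :
    heatBallConst n * w ≤ (ρ ^ 2) ^ (α / 2) * ∫ ξ, heatK n (x - ξ) (ρ ^ 2) * f ξ := by
  calc heatBallConst n * w = (ρ ^ 2) ^ (α / 2) * (heatBallConst n * (w * ρ ^ (-α))) := by
        have := Real.rpow_pos_of_pos hρ α
        rw [sq_rpow_half hρ.le, Real.rpow_neg hρ.le]
        field_simp
    _ ≤ _ := by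
        gcongr
        exact mul_le_integral_heatK_mul hf0 hf hρ (by positivity) hfw hx

end HeatKernel

section BallIndicatorSum

variable {X ι : Type*} [PseudoMetricSpace X]

noncomputable def ballIndicatorSum (c : ι → X) (r : ι → ℝ) (a : ι → ℝ≥0∞) (ξ : X) : ℝ≥0∞ :=
  ∑' i, (ball (c i) (r i)).indicator (fun _ => a i) ξ

variable (c : ι → X) (r : ι → ℝ) (a : ι → ℝ≥0∞)

theorem le_ballIndicatorSum {i : ι} {ξ : X} (hξ : ξ ∈ ball (c i) (r i)) :
    a i ≤ ballIndicatorSum c r a ξ := by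
  refine le_of_eq_of_le ?_ (ENNReal.le_tsum i)
  rw [indicator_of_mem hξ]

variable [MeasurableSpace X] [OpensMeasurableSpace X] [Countable ι]

theorem measurable_ballIndicatorSum : Measurable (ballIndicatorSum c r a) :=
  Measurable.tsum fun _ => measurable_const.indicator measurableSet_ball

theorem ae_toReal_le_toReal_ballIndicatorSum {μ : Measure X}
    (hfin : ∫⁻ ξ, ballIndicatorSum c r a ξ ∂μ ≠ ⊤) (i : ι) :
    ∀ᵐ ξ ∂μ, ξ ∈ ball (c i) (r i) → (a i).toReal ≤ (ballIndicatorSum c r a ξ).toReal := by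
  filter_upwards [ae_lt_top (measurable_ballIndicatorSum c r a) hfin] with ξ hξ hmem
  exact ENNReal.toReal_mono hξ.ne (le_ballIndicatorSum c r a hmem)

theorem lintegral_ballIndicatorSum (μ : Measure X) :
    ∫⁻ ξ, ballIndicatorSum c r a ξ ∂μ = ∑' i, a i * μ (ball (c i) (r i)) := by
  unfold ballIndicatorSum
  rw [lintegral_tsum fun i => (measurable_const.indicator measurableSet_ball).aemeasurable]
  simp only [lintegral_indicator measurableSet_ball, setLIntegral_const]

end BallIndicatorSum

/-- The `k`-th family of balls contributes at most `2 ^ k * 4⁻¹ ^ k = 2⁻¹ ^ k` times the volume of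
the unit ball. -/
theorem lintegral_ballIndicatorSum_lt_top {E : Type*} [NormedAddCommGroup E] [NormedSpace ℝ E]
    [MeasurableSpace E] [BorelSpace E] [FiniteDimensional ℝ E] (μ : Measure E)
    [μ.IsAddHaarMeasure] {α : ℝ} {c : ℕ → ℕ → E} {r : ℕ → ℕ → ℝ} (hr : ∀ k j, 0 < r k j)
    (hsum : ∀ k, ∑' j, ENNReal.ofReal (r k j ^ ((Module.finrank ℝ E : ℝ) - α)) ≤ 4⁻¹ ^ k) :
    ∫⁻ ξ, ballIndicatorSum (fun q : ℕ × ℕ => c q.1 q.2) (fun q => r q.1 q.2)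
      (fun q => ENNReal.ofReal (2 ^ q.1 * r q.1 q.2 ^ (-α))) ξ ∂μ < ⊤ := by
  have hball : ∀ k j, ENNReal.ofReal (2 ^ k * r k j ^ (-α)) * μ (ball (c k j) (r k j)) =
      2 ^ k * ENNReal.ofReal (r k j ^ ((Module.finrank ℝ E : ℝ) - α)) * μ (ball 0 1) := by
    intro k j
    have hpow : ENNReal.ofReal (r k j ^ (-α)) * ENNReal.ofReal (r k j ^ Module.finrank ℝ E) =
        ENNReal.ofReal (r k j ^ ((Module.finrank ℝ E : ℝ) - α)) := by
      rw [← ENNReal.ofReal_mul (Real.rpow_nonneg (hr k j).le _), ← Real.rpow_natCast,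
        ← Real.rpow_add (hr k j), neg_add_eq_sub]
    rw [Measure.addHaar_ball_of_pos μ _ (hr k j), ENNReal.ofReal_mul (by positivity),
      ENNReal.ofReal_pow zero_le_two, ENNReal.ofReal_ofNat, ← hpow]
    ring
  calc ∫⁻ ξ, ballIndicatorSum (fun q : ℕ × ℕ => c q.1 q.2) (fun q => r q.1 q.2)
        (fun q => ENNReal.ofReal (2 ^ q.1 * r q.1 q.2 ^ (-α))) ξ ∂μ
      = (∑' k, 2 ^ k * ∑' j, ENNReal.ofReal (r k j ^ ((Module.finrank ℝ E : ℝ) - α))) *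
          μ (ball 0 1) := by
        rw [lintegral_ballIndicatorSum, ENNReal.tsum_prod', ← ENNReal.tsum_mul_right]
        refine tsum_congr fun k => ?_
        rw [← ENNReal.tsum_mul_left, ← ENNReal.tsum_mul_right]
        refine tsum_congr fun j => ?_
        exact hball k j
    _ ≤ (∑' k : ℕ, 2⁻¹ ^ k) * μ (ball 0 1) := by
        gcongr with k
        calc 2 ^ k * ∑' j, ENNReal.ofReal (r k j ^ ((Module.finrank ℝ E : ℝ) - α))
            ≤ 2 ^ k * 4⁻¹ ^ k := by gcongr; exact hsum k
          _ = 2⁻¹ ^ k := by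
            rw [← mul_pow, show (4 : ℝ≥0∞) = 2 * 2 by norm_num, ENNReal.mul_inv (by simp) (by simp),
              ← mul_assoc, ENNReal.mul_inv_cancel (by simp) (by simp), one_mul]
    _ < ⊤ := by
        rw [ENNReal.tsum_geometric, ENNReal.one_sub_inv_two, inv_inv]
        exact ENNReal.mul_lt_top ENNReal.ofNat_lt_top measure_ball_lt_top

theorem tendsto_nhds_zero_of_tendsto_rpow {β : Type*} {l : Filter β} {u : β → ℝ} {p : ℝ}
    (hu : ∀ b, 0 ≤ u b) (hp : 0 < p) (h : Tendsto (fun b => u b ^ p) l (𝓝 0)) :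
    Tendsto u l (𝓝 0) := by
  have := h.rpow_const (p := p⁻¹) (Or.inr (inv_nonneg.2 hp.le))
  rw [Real.zero_rpow (inv_ne_zero hp.ne')] at this
  exact this.congr fun b => Real.rpow_rpow_inv (hu b) hp.ne'

theorem tendsto_nhds_zero_of_ofReal_rpow_le_pow {u : ℕ → ℝ} {p : ℝ} {q : ℝ≥0∞}
    (hu : ∀ k, 0 ≤ u k) (hp : 0 < p) (hq : q < 1) (h : ∀ k, ENNReal.ofReal (u k ^ p) ≤ q ^ k) :
    Tendsto u atTop (𝓝 0) := by
  refine tendsto_nhds_zero_of_tendsto_rpow hu hp ?_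
  have := tendsto_of_tendsto_of_tendsto_of_le_of_le tendsto_const_nhds
    (ENNReal.tendsto_pow_atTop_nhds_zero_of_lt_one hq) (fun _ => zero_le) h
  have h2 := (ENNReal.tendsto_toReal ENNReal.zero_ne_top).comp this
  rw [ENNReal.toReal_zero] at h2
  exact h2.congr fun k => ENNReal.toReal_ofReal (Real.rpow_nonneg (hu k) p)

theorem limsup_ofReal_eq_top {β : Type*} {l : Filter β} {g : β → ℝ} {t : ℕ → β}
    (ht : Tendsto t atTop l) (hg : Tendsto (g ∘ t) atTop atTop) :
    limsup (fun s => ENNReal.ofReal (g s)) l = ⊤ := by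
  refine ENNReal.eq_top_of_forall_nnreal_le fun M => le_limsup_of_frequently_le' ?_
  refine ht.frequently (Eventually.frequently ?_)
  filter_upwards [hg.eventually_ge_atTop (M : ℝ)] with k hk
  rw [← ENNReal.ofReal_coe_nnreal]
  exact ENNReal.ofReal_le_ofReal hk

theorem stmt11 (n : ℕ) (α : ℝ) (hα : α ∈ Ico (0 : ℝ) n)
    (E : Set (EuclideanSpace ℝ (Fin n))) (hE : μH[(n : ℝ) - α] E = 0) :
    ∃ f : EuclideanSpace ℝ (Fin n) → ℝ, (∀ ξ, 0 ≤ f ξ) ∧ Integrable f ∧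
      ∀ x ∈ E,
        limsup (fun t : ℝ =>
            ENNReal.ofReal (t ^ (α / 2) * ∫ ξ, heatK n (x - ξ) t * f ξ))
          (nhdsWithin 0 (Ioi 0)) = ⊤ := by
  have hp : 0 < (n : ℝ) - α := sub_pos.2 hα.2
  choose c r hr hcover hsum using fun k : ℕ =>
    exists_ball_cover_tsum_rpow_lt hp hE (pow_ne_zero k (by simp : (4 : ℝ≥0∞)⁻¹ ≠ 0))
  set F := ballIndicatorSum (fun q : ℕ × ℕ => c q.1 q.2) (fun q => r q.1 q.2)
    (fun q => ENNReal.ofReal (2 ^ q.1 * r q.1 q.2 ^ (-α)))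
  have hF : ∫⁻ ξ, F ξ ≠ ⊤ := (lintegral_ballIndicatorSum_lt_top volume hr fun k => by
    simpa only [finrank_euclideanSpace_fin] using (hsum k).le).ne
  have hf : Integrable fun ξ => (F ξ).toReal :=
    integrable_toReal_of_lintegral_ne_top (measurable_ballIndicatorSum _ _ _).aemeasurable hF
  refine ⟨fun ξ => (F ξ).toReal, fun _ => ENNReal.toReal_nonneg, hf, fun x hx => ?_⟩
  choose j hj using fun k => mem_iUnion.1 (hcover k hx)
  have hbound : ∀ k, heatBallConst n * 2 ^ k ≤ (r k (j k) ^ 2) ^ (α / 2) *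
      ∫ ξ, heatK n (x - ξ) (r k (j k) ^ 2) * (F ξ).toReal := fun k => by
    have hρ := hr k (j k)
    refine mul_le_rpow_mul_integral_heatK_mul (fun _ => ENNReal.toReal_nonneg) hf α hρ
      (by positivity) ?_ (hj k)
    simpa only [ENNReal.toReal_ofReal (by positivity : (0 : ℝ) ≤ 2 ^ k * r k (j k) ^ (-α))] using
      ae_toReal_le_toReal_ballIndicatorSum _ _ _ hF (k, j k)
  have hr_lim : Tendsto (fun k => r k (j k)) atTop (𝓝 0) :=
    tendsto_nhds_zero_of_ofReal_rpow_le_pow (fun k => (hr k (j k)).le) hp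
      (ENNReal.inv_lt_one.2 (by norm_num)) fun k => (ENNReal.le_tsum (j k)).trans (hsum k).le
  refine limsup_ofReal_eq_top (t := fun k => r k (j k) ^ 2) ?_ ?_
  · refine tendsto_nhdsWithin_iff.2 ⟨by simpa using hr_lim.pow 2, Eventually.of_forall fun k => ?_⟩
    exact pow_pos (hr k (j k)) 2
  · exact tendsto_atTop_mono hbound
      ((tendsto_pow_atTop_atTop_of_one_lt one_lt_two).const_mul_atTop (heatBallConst_pos n))
end
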